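/- arXiv:1504.05485 — 7 statements merged into one kernel-verified Lean document; each statement's English description precedes it below -/
import Mathlib

section
/- Let n be a positive integer, c > 0 and x₀ > 1 be real numbers such that for every real x ≥ x₀ there exists a prime p with x < p ≤ x·(1 + c/(log x)ⁿ). Then for every real x ≥ x₀, setting k = 1 + c/(log x)ⁿ, the first k-Ramanujan prime satisfies R₁⁽ᵏ⁾ ≤ k·x. -/
open Real

/-- The prime counting function `π` extended to the reals:
`primePi x` is the number of primes `p ≤ x`. -/
noncomputable def primePi (x : ℝ) : ℕ := Nat.primeCounting ⌊x⌋₊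

/-- The first `k`-Ramanujan prime `R₁⁽ᵏ⁾`: the least positive integer `m` such that
`π(x) - π(x/k) ≥ 1` for every real `x ≥ m`. -/
noncomputable def firstRamanujanPrime (k : ℝ) : ℕ :=
  sInf {m : ℕ | 0 < m ∧ ∀ x : ℝ, (m : ℝ) ≤ x → primePi (x / k) < primePi x}

/-- The `n`-th prime number, with `nthPrime 1 = 2`, `nthPrime 2 = 3`, … -/
noncomputable def nthPrime (n : ℕ) : ℕ := Nat.nth Nat.Prime (n - 1)

lemma primeCounting_lt_of_prime_between {a b q : ℕ} (hq : q.Prime) (h1 : a < q) (h2 : q ≤ b) :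
    Nat.primeCounting a < Nat.primeCounting b := by
  unfold Nat.primeCounting Nat.primeCounting'
  calc Nat.count Nat.Prime (a + 1) ≤ Nat.count Nat.Prime q := Nat.count_monotone _ h1
    _ < Nat.count Nat.Prime (b + 1) := Nat.count_strict_mono hq (by omega)

theorem first_k_ramanujan_stmt1 (n : ℕ) (hn : 0 < n) (c x₀ : ℝ) (hc : 0 < c) (hx₀ : 1 < x₀)
    (h : ∀ x : ℝ, x₀ ≤ x →
      ∃ p : ℕ, p.Prime ∧ x < (p : ℝ) ∧ (p : ℝ) ≤ x * (1 + c / (Real.log x) ^ n)) :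
    ∀ x : ℝ, x₀ ≤ x →
      (firstRamanujanPrime (1 + c / (Real.log x) ^ n) : ℝ) ≤ (1 + c / (Real.log x) ^ n) * x := by
  intro x hx
  have hx1 : 1 < x := lt_of_lt_of_le hx₀ hx
  have hL : 0 < Real.log x := Real.log_pos hx1
  set k := 1 + c / Real.log x ^ n with hkdef
  have hLn : 0 < Real.log x ^ n := pow_pos hL n
  have hk1 : 1 < k := by
    have : 0 < c / Real.log x ^ n := div_pos hc hLn
    simp only [hkdef]; linarith
  have hk0 : 0 < k := by linarith
  obtain ⟨p, hp, hxp, hpk⟩ := h x hx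
  have hpkx : (p : ℝ) ≤ k * x := by rw [mul_comm]; exact hpk
  have hmem : p ∈ {m : ℕ | 0 < m ∧ ∀ y : ℝ, (m : ℝ) ≤ y → primePi (y / k) < primePi y} := by
    refine ⟨hp.pos, fun y hy => ?_⟩
    have hyx : x < y := lt_of_lt_of_le hxp hy
    have hy0 : (0:ℝ) < y := by linarith
    have hyk0 : (0:ℝ) ≤ y / k := le_of_lt (div_pos hy0 hk0)
    rcases le_or_gt (k * x) y with hky | hky
    · -- y ≥ k x : apply the hypothesis at y / k
      have hyk : x ≤ y / k := (le_div_iff₀ hk0).mpr (by linarith [mul_comm k x])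
      obtain ⟨q, hq, h1, h2⟩ := h (y / k) (le_trans hx hyk)
      have hlog : Real.log x ≤ Real.log (y / k) :=
        Real.log_le_log (by linarith) hyk
      have hLyk : 0 < Real.log (y / k) := lt_of_lt_of_le hL hlog
      have hpow : Real.log x ^ n ≤ Real.log (y / k) ^ n :=
        pow_le_pow_left₀ (le_of_lt hL) hlog n
      have hdiv : c / Real.log (y / k) ^ n ≤ c / Real.log x ^ n :=
        div_le_div_of_nonneg_left (le_of_lt hc) hLn hpow
      have hfac : 1 + c / Real.log (y / k) ^ n ≤ k := by
        simp only [hkdef]; linarith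
      have hq_le : (q : ℝ) ≤ y :=
        calc (q : ℝ) ≤ (y / k) * (1 + c / Real.log (y / k) ^ n) := h2
          _ ≤ (y / k) * k := mul_le_mul_of_nonneg_left hfac hyk0
          _ = y := div_mul_cancel₀ y (ne_of_gt hk0)
      have hfloor1 : ⌊y / k⌋₊ < q := by
        have : (⌊y / k⌋₊ : ℝ) < q := lt_of_le_of_lt (Nat.floor_le hyk0) h1
        exact_mod_cast this
      have hfloor2 : q ≤ ⌊y⌋₊ := Nat.le_floor hq_le
      exact primeCounting_lt_of_prime_between hq hfloor1 hfloor2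
    · -- p ≤ y < k x : p itself is a prime in (y/k, y]
      have h1 : y / k < x := (div_lt_iff₀ hk0).mpr (by linarith [mul_comm k x])
      have hfloor1 : ⌊y / k⌋₊ < p := by
        have : (⌊y / k⌋₊ : ℝ) < p := lt_of_le_of_lt (Nat.floor_le hyk0) (lt_trans h1 hxp)
        exact_mod_cast this
      have hfloor2 : p ≤ ⌊y⌋₊ := Nat.le_floor hy
      exact primeCounting_lt_of_prime_between hp hfloor1 hfloor2
  have hinf : firstRamanujanPrime k ≤ p := Nat.sInf_le hmem
  calc (firstRamanujanPrime k : ℝ) ≤ (p : ℝ) := by exact_mod_cast hinf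
    _ ≤ k * x := hpkx
end

section
/- Let n be a positive integer, c > 0 and x₀ > 1 be real numbers such that for every real x ≥ x₀ there exists a prime p with x < p ≤ x·(1 + c/(log x)ⁿ). Then for every real k with 1 < k ≤ 1 + c/(log x₀)ⁿ, the first k-Ramanujan prime satisfies R₁⁽ᵏ⁾ ≤ k·exp((c/(k−1))^(1/n)). -/
open Real

lemma primePi_lt_of_prime_between {a b : ℝ} {q : ℕ} (hq : q.Prime)
    (ha : a < q) (hb : (q : ℝ) ≤ b) : primePi a < primePi b := by
  have h1 : ⌊a⌋₊ < q := by
    rcases le_or_gt 0 a with h0 | h0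
    · have : (⌊a⌋₊ : ℝ) < q := (Nat.floor_le h0).trans_lt ha
      exact_mod_cast this
    · simpa [Nat.floor_of_nonpos h0.le] using hq.pos
  have h2 : q ≤ ⌊b⌋₊ := Nat.le_floor hb
  unfold primePi Nat.primeCounting Nat.primeCounting'
  calc Nat.count Nat.Prime (⌊a⌋₊ + 1) ≤ Nat.count Nat.Prime q :=
        Nat.count_monotone _ h1
    _ < Nat.count Nat.Prime (q + 1) := by simp [Nat.count_succ, hq]
    _ ≤ Nat.count Nat.Prime (⌊b⌋₊ + 1) := Nat.count_monotone _ (by omega)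

theorem first_k_ramanujan_stmt2 (n : ℕ) (hn : 0 < n) (c x₀ : ℝ) (hc : 0 < c) (hx₀ : 1 < x₀)
    (h : ∀ x : ℝ, x₀ ≤ x →
      ∃ p : ℕ, p.Prime ∧ x < (p : ℝ) ∧ (p : ℝ) ≤ x * (1 + c / (Real.log x) ^ n)) :
    ∀ k : ℝ, 1 < k → k ≤ 1 + c / (Real.log x₀) ^ n →
      (firstRamanujanPrime k : ℝ) ≤ k * Real.exp ((c / (k - 1)) ^ ((1 : ℝ) / n)) := by
  intro k hk1 hk2
  have hk0 : (0 : ℝ) < k := by linarith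
  set t : ℝ := (c / (k - 1)) ^ ((1 : ℝ) / n) with ht
  have hk1' : (0 : ℝ) < k - 1 := by linarith
  have hck : 0 < c / (k - 1) := div_pos hc hk1'
  have ht0 : 0 < t := Real.rpow_pos_of_pos hck _
  have hnR : (n : ℝ) ≠ 0 := by exact_mod_cast hn.ne'
  have htn : t ^ n = c / (k - 1) := by
    rw [ht, ← Real.rpow_natCast ((c / (k - 1)) ^ ((1:ℝ)/n)) n, ← Real.rpow_mul hck.le,
      one_div, inv_mul_cancel₀ hnR, Real.rpow_one]
  have hlx₀ : 0 < Real.log x₀ := Real.log_pos hx₀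
  have htx₀ : Real.log x₀ ≤ t := by
    have h1 : Real.log x₀ ^ n ≤ c / (k - 1) := by
      have h2 : k - 1 ≤ c / (Real.log x₀) ^ n := by linarith
      rw [le_div_iff₀ (by positivity)] at h2
      rw [le_div_iff₀ hk1']
      linarith [h2]
    calc Real.log x₀ = ((Real.log x₀ ^ n : ℝ)) ^ ((1:ℝ)/n) := by
          rw [← Real.rpow_natCast (Real.log x₀) n, ← Real.rpow_mul hlx₀.le,
            mul_one_div, div_self hnR, Real.rpow_one]
      _ ≤ t := Real.rpow_le_rpow (by positivity) h1 (by positivity)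
  set T : ℝ := Real.exp t with hT
  have hT1 : 1 < T := by
    rw [hT, ← Real.exp_zero]
    exact Real.exp_lt_exp.2 ht0
  have hTx₀ : x₀ ≤ T := by
    calc x₀ = Real.exp (Real.log x₀) := (Real.exp_log (by linarith)).symm
      _ ≤ T := Real.exp_le_exp.2 htx₀
  have hlogT : Real.log T = t := Real.log_exp t
  have hTk : T * (1 + c / (Real.log T) ^ n) = k * T := by
    rw [hlogT, htn]
    have : c / (c / (k - 1)) = k - 1 := by
      field_simp
    rw [this]; ring
  obtain ⟨p, hp, hTp, hpk⟩ := h T hTx₀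
  rw [hTk] at hpk
  -- p is in the defining set
  have hmem : p ∈ {m : ℕ | 0 < m ∧ ∀ x : ℝ, (m : ℝ) ≤ x → primePi (x / k) < primePi x} := by
    refine ⟨hp.pos, fun x hx => ?_⟩
    rcases lt_or_ge x (k * T) with hcase | hcase
    · -- p itself is a prime in (x/k, x]
      refine primePi_lt_of_prime_between hp ?_ hx
      have : x / k < T := (div_lt_iff₀ hk0).2 (by linarith [hcase])
      linarith
    · -- apply h at y = x / k
      have hyT : T ≤ x / k := (le_div_iff₀ hk0).2 (by linarith [hcase])
      have hy0 : 0 < x / k := lt_of_lt_of_le (by linarith) hyT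
      obtain ⟨q, hq, hyq, hqy⟩ := h (x / k) (hTx₀.trans hyT)
      refine primePi_lt_of_prime_between hq hyq ?_
      have hly : t ≤ Real.log (x / k) := by
        rw [← hlogT]; exact Real.log_le_log (by linarith) hyT
      have hpow : t ^ n ≤ Real.log (x / k) ^ n := pow_le_pow_left₀ ht0.le hly n
      have hdiv : c / Real.log (x / k) ^ n ≤ k - 1 := by
        calc c / Real.log (x / k) ^ n ≤ c / t ^ n :=
              div_le_div_of_nonneg_left hc.le (by positivity) hpow
          _ = k - 1 := by rw [htn]; field_simp
      calc (q : ℝ) ≤ x / k * (1 + c / Real.log (x / k) ^ n) := hqy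
        _ ≤ x / k * k := by
            apply mul_le_mul_of_nonneg_left (by linarith) hy0.le
        _ = x := div_mul_cancel₀ x hk0.ne'
  have hinf : firstRamanujanPrime k ≤ p := Nat.sInf_le hmem
  calc (firstRamanujanPrime k : ℝ) ≤ (p : ℝ) := by exact_mod_cast hinf
    _ ≤ k * T := hpk
end

section
/- Let k > 1 be real and let N ≥ 2 be an integer. Then p_N equals the first k-Ramanujan prime R₁⁽ᵏ⁾ if and only if the following two conditions both hold: (a) for every integer n ≥ N one has p_{n+1}/p_n ≤ k, and (b) p_N/p_{N−1} > k. -/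
open Real

local notation "q" => Nat.nth Nat.Prime

lemma q_prime (i : ℕ) : (q i).Prime :=
  Nat.nth_mem_of_infinite Nat.infinite_setOf_prime i

lemma q_pos (i : ℕ) : 0 < q i := (q_prime i).pos

lemma q_mono : StrictMono q := Nat.nth_strictMono Nat.infinite_setOf_prime

/-- Key Galois-connection lemma: `q i ≤ x ↔ i < primePi x` for `x ≥ 0`. -/
lemma q_le_iff (x : ℝ) (hx : 0 ≤ x) (i : ℕ) :
    (q i : ℝ) ≤ x ↔ i < primePi x := by
  rw [show primePi x = Nat.count Nat.Prime (⌊x⌋₊ + 1) from rfl,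
    Nat.lt_nth_iff_count_lt Nat.infinite_setOf_prime, Nat.lt_succ_iff,
    Nat.le_floor_iff hx]

/-- There is a prime in `(x/k, x]` iff `primePi (x/k) < primePi x`. -/
lemma pi_lt_iff (k x : ℝ) (hk : 0 < k) (hx : 0 ≤ x) :
    primePi (x / k) < primePi x ↔ ∃ t, x / k < (q t : ℝ) ∧ (q t : ℝ) ≤ x := by
  have hxk : (0:ℝ) ≤ x / k := div_nonneg hx hk.le
  constructor
  · intro h
    refine ⟨primePi (x / k), ?_, ?_⟩
    · by_contra hc
      push_neg at hc
      exact lt_irrefl _ ((q_le_iff _ hxk _).mp hc)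
    · exact (q_le_iff x hx _).mpr h
  · rintro ⟨t, h1, h2⟩
    have ht1 : primePi (x / k) ≤ t := by
      by_contra hc
      push_neg at hc
      exact absurd ((q_le_iff _ hxk t).mpr hc) (not_le.mpr h1)
    exact lt_of_le_of_lt ht1 ((q_le_iff x hx t).mp h2)

/-- Helper version of the main theorem, phrased with `Nat.nth Nat.Prime`. -/
lemma main_aux (k : ℝ) (hk : 1 < k) (i : ℕ) (hi : 1 ≤ i) :
    q i = firstRamanujanPrime k ↔
      ((∀ j : ℕ, i ≤ j → (q (j + 1) : ℝ) ≤ k * q j) ∧ k * q (i - 1) < q i) := by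
  have hk0 : (0:ℝ) < k := lt_trans one_pos hk
  set S : Set ℕ := {m : ℕ | 0 < m ∧ ∀ x : ℝ, (m : ℝ) ≤ x → primePi (x / k) < primePi x}
    with hS
  have qcast_pos : ∀ j : ℕ, (0:ℝ) < (q j : ℝ) := fun j => by exact_mod_cast q_pos j
  constructor
  · intro h
    have hSne : S.Nonempty := by
      by_contra hc
      rw [Set.not_nonempty_iff_eq_empty] at hc
      rw [firstRamanujanPrime, ← hS, hc, Nat.sInf_empty] at h
      exact (q_pos i).ne' h
    have hmem : q i ∈ S := by
      rw [h, firstRamanujanPrime, ← hS]; exact Nat.sInf_mem hSne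
    obtain ⟨-, hall⟩ := hmem
    constructor
    · intro j hj
      by_contra hc
      push_neg at hc
      set x : ℝ := max (k * q j) ((q (j + 1) : ℝ) - 1/2) with hx
      have hx1 : (q i : ℝ) ≤ x := by
        have h1 : (q i : ℝ) + 1 ≤ (q (j + 1) : ℝ) := by
          have : q i < q (j + 1) := q_mono (lt_of_le_of_lt hj (Nat.lt_succ_self j))
          exact_mod_cast this
        have : (q i : ℝ) ≤ (q (j + 1) : ℝ) - 1/2 := by linarith
        exact le_max_of_le_right this
      have hx0 : (0:ℝ) ≤ x :=
        le_trans (by positivity) hx1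
      obtain ⟨t, ht1, ht2⟩ := (pi_lt_iff k x hk0 hx0).mp (hall x hx1)
      have hxlt : x < (q (j + 1) : ℝ) := by
        apply max_lt hc (by linarith)
      have htj : q t ≤ q j := by
        have : q t < q (j + 1) := by exact_mod_cast lt_of_le_of_lt ht2 hxlt
        have := q_mono.lt_iff_lt.mp this
        exact q_mono.monotone (Nat.lt_succ_iff.mp this)
      have hdiv : (q j : ℝ) ≤ x / k := (le_div_iff₀ hk0).mpr (by
        rw [mul_comm]; exact le_max_left _ _)
      have : (q j : ℝ) < (q t : ℝ) := lt_of_le_of_lt hdiv ht1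
      exact absurd (by exact_mod_cast htj) (not_le.mpr this)
    · by_contra hc
      push_neg at hc
      have hmem' : q (i - 1) ∈ S := by
        refine ⟨q_pos _, fun x hx => ?_⟩
        have hx0 : (0:ℝ) ≤ x := le_trans (by positivity) hx
        rcases le_or_gt (q i : ℝ) x with hxi | hxi
        · exact hall x hxi
        · refine (pi_lt_iff k x hk0 hx0).mpr ⟨i - 1, ?_, hx⟩
          rw [div_lt_iff₀ hk0, mul_comm]
          exact lt_of_lt_of_le hxi hc
      have hle : firstRamanujanPrime k ≤ q (i - 1) := Nat.sInf_le hmem'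
      rw [← h] at hle
      exact absurd hle (not_le.mpr (q_mono (Nat.sub_lt hi one_pos)))
  · rintro ⟨ha, hb⟩
    have hmemi : q i ∈ S := by
      refine ⟨q_pos i, fun x hx => ?_⟩
      have hx0 : (0:ℝ) ≤ x := le_trans (by positivity) hx
      set c := primePi x with hc
      have hic : i < c := (q_le_iff x hx0 i).mp hx
      have hc1 : 1 ≤ c := le_trans (Nat.succ_le_of_lt (Nat.pos_of_ne_zero (by omega))) le_rfl
      set j := c - 1 with hj
      have hij : i ≤ j := by omega
      have hqjx : (q j : ℝ) ≤ x := (q_le_iff x hx0 j).mpr (by omega)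
      have hxq : x < (q (j + 1) : ℝ) := by
        by_contra hcon
        push_neg at hcon
        have := (q_le_iff x hx0 (j + 1)).mp hcon
        omega
      refine (pi_lt_iff k x hk0 hx0).mpr ⟨j, ?_, hqjx⟩
      rw [div_lt_iff₀ hk0]
      calc x < (q (j + 1) : ℝ) := hxq
        _ ≤ k * q j := ha j hij
        _ = (q j : ℝ) * k := mul_comm _ _
    have hSne : S.Nonempty := ⟨q i, hmemi⟩
    have hle : firstRamanujanPrime k ≤ q i := Nat.sInf_le hmemi
    have hge : q i ≤ firstRamanujanPrime k := by
      by_contra hcon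
      push_neg at hcon
      set m := firstRamanujanPrime k with hm
      have hmmem : m ∈ S := Nat.sInf_mem hSne
      obtain ⟨hmpos, hmall⟩ := hmmem
      set x : ℝ := max (k * q (i - 1)) ((q i : ℝ) - 1/2) with hx
      have hx0 : (0:ℝ) ≤ x := le_trans (by positivity) (le_max_left _ _)
      have hxm : (m : ℝ) ≤ x := by
        have h1 : (m : ℝ) ≤ (q i : ℝ) - 1 := by
          have : m + 1 ≤ q i := hcon
          have := (Nat.cast_le (α := ℝ)).mpr this
          push_cast at this; linarith
        exact le_max_of_le_right (by linarith)
      have hxlt : x < (q i : ℝ) := max_lt hb (by linarith)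
      obtain ⟨t, ht1, ht2⟩ := (pi_lt_iff k x hk0 hx0).mp (hmall x hxm)
      have hti : q t < q i := by exact_mod_cast lt_of_le_of_lt ht2 hxlt
      have hti' : t < i := q_mono.lt_iff_lt.mp hti
      have htle : q t ≤ q (i - 1) := q_mono.monotone (by omega)
      have hdiv : (q (i - 1) : ℝ) ≤ x / k := (le_div_iff₀ hk0).mpr (by
        rw [mul_comm]; exact le_max_left _ _)
      have : (q (i - 1) : ℝ) < (q t : ℝ) := lt_of_le_of_lt hdiv ht1
      exact absurd (by exact_mod_cast htle) (not_le.mpr this)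
    exact le_antisymm hge hle

theorem first_k_ramanujan_stmt3 (k : ℝ) (hk : 1 < k) (N : ℕ) (hN : 2 ≤ N) :
    nthPrime N = firstRamanujanPrime k ↔
      ((∀ n : ℕ, N ≤ n → (nthPrime (n + 1) : ℝ) / (nthPrime n : ℝ) ≤ k) ∧
        k < (nthPrime N : ℝ) / (nthPrime (N - 1) : ℝ)) := by
  have qcast_pos : ∀ j : ℕ, (0:ℝ) < (q j : ℝ) := fun j => by
    exact_mod_cast (Nat.nth_mem_of_infinite Nat.infinite_setOf_prime j).pos
  have hi : 1 ≤ N - 1 := by omega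
  unfold nthPrime
  simp only [Nat.add_sub_cancel]
  rw [main_aux k hk (N - 1) hi]
  constructor
  · rintro ⟨ha, hb⟩
    constructor
    · intro n hn
      rw [div_le_iff₀ (qcast_pos _)]
      have := ha (n - 1) (by omega)
      have hn1 : n - 1 + 1 = n := by omega
      rw [hn1] at this
      linarith [this]
    · rw [lt_div_iff₀ (qcast_pos _)]
      linarith [hb]
  · rintro ⟨ha, hb⟩
    constructor
    · intro j hj
      have := ha (j + 1) (by omega)
      rw [div_le_iff₀ (qcast_pos _)] at this
      simp only [Nat.add_sub_cancel] at this
      linarith [this]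
    · rw [lt_div_iff₀ (qcast_pos _)] at hb
      linarith [hb]
end

section
/- Let k > 1 be real and let N ≥ 2 be an integer. If p_N equals the first k-Ramanujan prime R₁⁽ᵏ⁾, then for every integer n ≥ N one has p_{n+1}/p_n ≤ k, and moreover p_N/p_{N−1} > k. -/
open Real

/-
If `p_N = R₁⁽ᵏ⁾`, then `π(x) > π(x/k)` for all `x ≥ p_N`. Were `p_{n+1} > k p_n` for some
`n ≥ N`, the point `x = k p_n` would have `π(x) = π(x/k) = n`. Were `p_N ≤ k p_{N-1}`, every
`x ∈ [p_{N-1}, p_N)` would satisfy `π(x) = N - 1 > π(x/k)`, so `p_{N-1}` would already have the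
defining property and `R₁⁽ᵏ⁾ ≤ p_{N-1} < p_N`.
-/

theorem primePi_le_iff_lt_nth_prime {x : ℝ} {i : ℕ} :
    primePi x ≤ i ↔ x < Nat.nth Nat.Prime i := by
  rw [primePi, Nat.primeCounting, Nat.primeCounting',
    Nat.count_le_iff_le_nth Nat.infinite_setOfPred_prime, Nat.add_one_le_iff,
    Nat.floor_lt' (Nat.prime_nth_prime i).ne_zero]

theorem lt_primePi_iff_nth_prime_le {x : ℝ} {i : ℕ} :
    i < primePi x ↔ (Nat.nth Nat.Prime i : ℝ) ≤ x := by
  rw [← not_le, primePi_le_iff_lt_nth_prime, not_lt]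

def IsRamanujanBound (k : ℝ) (m : ℕ) : Prop :=
  0 < m ∧ ∀ x : ℝ, (m : ℝ) ≤ x → primePi (x / k) < primePi x

theorem firstRamanujanPrime_le {k : ℝ} {m : ℕ} (hm : IsRamanujanBound k m) :
    firstRamanujanPrime k ≤ m :=
  Nat.sInf_le hm

theorem isRamanujanBound_firstRamanujanPrime {k : ℝ} (h : 0 < firstRamanujanPrime k) :
    IsRamanujanBound k (firstRamanujanPrime k) :=
  Nat.sInf_mem (Nat.nonempty_of_pos_sInf h)

namespace IsRamanujanBound

variable {k : ℝ} {m : ℕ}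

theorem nth_prime_succ_le_mul (hm : IsRamanujanBound k m) (hk : 0 < k) {n : ℕ}
    (hmn : (m : ℝ) ≤ k * Nat.nth Nat.Prime n) :
    (Nat.nth Nat.Prime (n + 1) : ℝ) ≤ k * Nat.nth Nat.Prime n := by
  by_contra! hgap
  have hlower : n < primePi (k * Nat.nth Nat.Prime n / k) := by
    rw [mul_div_cancel_left₀ _ hk.ne', lt_primePi_iff_nth_prime_le]
  have hupper : primePi (k * Nat.nth Nat.Prime n) ≤ n + 1 :=
    primePi_le_iff_lt_nth_prime.2 hgap
  have hsep := hm.2 _ hmn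
  omega

theorem of_nth_prime_succ_le_mul {i : ℕ} (hm : IsRamanujanBound k (Nat.nth Nat.Prime (i + 1)))
    (hk : 0 < k) (hgap : (Nat.nth Nat.Prime (i + 1) : ℝ) ≤ k * Nat.nth Nat.Prime i) :
    IsRamanujanBound k (Nat.nth Nat.Prime i) := by
  refine ⟨(Nat.prime_nth_prime i).pos, fun x hx => ?_⟩
  rcases le_or_gt (Nat.nth Nat.Prime (i + 1) : ℝ) x with hlarge | hsmall
  · exact hm.2 x hlarge
  have hquot : primePi (x / k) ≤ i := by
    rw [primePi_le_iff_lt_nth_prime, div_lt_iff₀ hk, mul_comm]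
    exact hsmall.trans_le hgap
  exact hquot.trans_lt (lt_primePi_iff_nth_prime_le.2 hx)

end IsRamanujanBound

theorem first_k_ramanujan_stmt4 (k : ℝ) (hk : 1 < k) (N : ℕ) (hN : 2 ≤ N)
    (h : nthPrime N = firstRamanujanPrime k) :
    (∀ n : ℕ, N ≤ n → (nthPrime (n + 1) : ℝ) / (nthPrime n : ℝ) ≤ k) ∧
      k < (nthPrime N : ℝ) / (nthPrime (N - 1) : ℝ) := by
  obtain ⟨i, rfl⟩ : ∃ i, N = i + 2 := ⟨N - 2, by omega⟩
  have hk0 : 0 < k := zero_lt_one.trans hk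
  have hpos : ∀ j, (0 : ℝ) < Nat.nth Nat.Prime j := fun j => mod_cast (Nat.prime_nth_prime j).pos
  have hR : Nat.nth Nat.Prime (i + 1) = firstRamanujanPrime k := h
  have hbound : IsRamanujanBound k (Nat.nth Nat.Prime (i + 1)) :=
    hR ▸ isRamanujanBound_firstRamanujanPrime (hR ▸ (Nat.prime_nth_prime _).pos)
  refine ⟨fun n hn => ?_, ?_⟩
  · obtain ⟨j, rfl⟩ : ∃ j, n = j + 1 := ⟨n - 1, by omega⟩
    show (Nat.nth Nat.Prime (j + 1) : ℝ) / Nat.nth Nat.Prime j ≤ k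
    rw [div_le_iff₀ (hpos j)]
    refine hbound.nth_prime_succ_le_mul hk0 ?_
    have hmono : (Nat.nth Nat.Prime (i + 1) : ℝ) ≤ Nat.nth Nat.Prime j :=
      mod_cast Nat.nth_monotone Nat.infinite_setOfPred_prime (by omega)
    exact hmono.trans (le_mul_of_one_le_left (hpos j).le hk.le)
  · show k < (Nat.nth Nat.Prime (i + 1) : ℝ) / Nat.nth Nat.Prime i
    rw [lt_div_iff₀ (hpos i)]
    by_contra! hgap
    have hle := firstRamanujanPrime_le (hbound.of_nth_prime_succ_le_mul hk0 hgap)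
    have hlt : Nat.nth Nat.Prime i < Nat.nth Nat.Prime (i + 1) :=
      Nat.nth_strictMono Nat.infinite_setOfPred_prime (Nat.lt_succ_self i)
    rw [hR] at hlt
    omega
end

section
/- Let k > 1 be real and let N ≥ 2 be an integer. If p_{n+1}/p_n ≤ k holds for every integer n ≥ N, and p_N/p_{N−1} > k, then p_N equals the first k-Ramanujan prime R₁⁽ᵏ⁾. -/
open Real

private lemma infP : (setOf Nat.Prime).Infinite := Nat.infinite_setOf_prime

/-- π(nth prime n) = n+1 -/
private lemma pi_nth (n : ℕ) : Nat.primeCounting (Nat.nth Nat.Prime n) = n + 1 := by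
  unfold Nat.primeCounting Nat.primeCounting'
  refine le_antisymm ?_ ?_
  · rw [Nat.count_le_iff_le_nth infP]
    exact Nat.nth_strictMono infP (Nat.lt_succ_self n)
  · rw [Nat.succ_le_iff, Nat.lt_nth_iff_count_lt infP]
    exact Nat.lt_succ_self _

/-- if m < nth prime n then π(m) ≤ n -/
private lemma pi_lt_nth {m n : ℕ} (h : m < Nat.nth Nat.Prime n) :
    Nat.primeCounting m ≤ n := by
  unfold Nat.primeCounting Nat.primeCounting'
  rw [Nat.count_le_iff_le_nth infP]
  exact h

/-- m < nth prime (π m) -/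
private lemma lt_nth_pi (m : ℕ) : m < Nat.nth Nat.Prime (Nat.primeCounting m) := by
  have h : ¬ (Nat.primeCounting m < Nat.count Nat.Prime (m + 1)) := by
    simp [Nat.primeCounting, Nat.primeCounting']
  rw [Nat.lt_nth_iff_count_lt infP] at h
  omega


theorem first_k_ramanujan_stmt5 (k : ℝ) (hk : 1 < k) (N : ℕ) (hN : 2 ≤ N)
    (ha : ∀ n : ℕ, N ≤ n → (nthPrime (n + 1) : ℝ) / (nthPrime n : ℝ) ≤ k)
    (hb : k < (nthPrime N : ℝ) / (nthPrime (N - 1) : ℝ)) :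
    nthPrime N = firstRamanujanPrime k := by
  have hk0 : (0:ℝ) < k := lt_trans one_pos hk
  have hppos : ∀ n, 0 < nthPrime n := fun n => (Nat.prime_nth_prime _).pos
  have hmem : nthPrime N ∈ {m : ℕ | 0 < m ∧ ∀ x : ℝ, (m : ℝ) ≤ x →
      primePi (x / k) < primePi x} := by
    refine ⟨hppos N, fun x hx => ?_⟩
    set m := ⌊x⌋₊ with hm
    set c := Nat.primeCounting m with hc
    have hmN : nthPrime N ≤ m := Nat.le_floor hx
    have hpiN : Nat.primeCounting (nthPrime N) = N := by
      have := pi_nth (N-1)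
      unfold nthPrime
      omega
    have hcge : N ≤ c := by
      have := Nat.monotone_primeCounting hmN
      omega
    have h1 : m < Nat.nth Nat.Prime c := lt_nth_pi m
    have hxlt : x < (Nat.nth Nat.Prime c : ℝ) := by
      have h1' : ((m:ℝ) + 1) ≤ (Nat.nth Nat.Prime c : ℝ) := by exact_mod_cast h1
      have := Nat.lt_floor_add_one x
      linarith
    have hnth : Nat.nth Nat.Prime c = nthPrime (c+1) := by unfold nthPrime; norm_num
    have hac := ha c hcge
    have hpc0 : (0:ℝ) < nthPrime c := by exact_mod_cast hppos c
    have h2 : (nthPrime (c+1):ℝ) ≤ k * nthPrime c := by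
      rw [div_le_iff₀ hpc0] at hac
      linarith
    have h3 : x / k < (nthPrime c : ℝ) := by
      rw [div_lt_iff₀ hk0]
      rw [hnth] at hxlt
      linarith
    have h4 : ⌊x/k⌋₊ < nthPrime c := by
      have hx0 : (0:ℝ) ≤ x / k := by
        have : (0:ℝ) ≤ (nthPrime N : ℝ) := by positivity
        have hx0' : (0:ℝ) ≤ x := le_trans this hx
        positivity
      have hfl : (⌊x/k⌋₊:ℝ) ≤ x/k := Nat.floor_le hx0
      exact_mod_cast lt_of_le_of_lt hfl h3
    have h5 : Nat.primeCounting ⌊x/k⌋₊ ≤ c - 1 := by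
      apply pi_lt_nth
      unfold nthPrime at h4
      omega
    show Nat.primeCounting ⌊x/k⌋₊ < Nat.primeCounting ⌊x⌋₊
    rw [← hm, ← hc]
    omega
  have hlb : ∀ m ∈ {m : ℕ | 0 < m ∧ ∀ x : ℝ, (m : ℝ) ≤ x →
      primePi (x / k) < primePi x}, nthPrime N ≤ m := by
    intro m hmS
    by_contra hlt
    push_neg at hlt
    obtain ⟨hm0, hmx⟩ := hmS
    have hp0 : (0:ℝ) < nthPrime (N-1) := by exact_mod_cast hppos (N-1)
    set x := max (m : ℝ) (k * nthPrime (N-1)) with hxdef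
    have h1 := hmx x (le_max_left _ _)
    have hx1 : (nthPrime (N-1) : ℝ) ≤ x / k := by
      rw [le_div_iff₀ hk0]
      have := le_max_right (m:ℝ) (k * nthPrime (N-1))
      linarith
    have h2 : N - 1 ≤ primePi (x/k) := by
      have hfl : nthPrime (N-1) ≤ ⌊x/k⌋₊ := Nat.le_floor hx1
      have hmono := Nat.monotone_primeCounting hfl
      have hpi : Nat.primeCounting (nthPrime (N-1)) = N - 1 := by
        have := pi_nth (N-1-1)
        unfold nthPrime
        omega
      unfold primePi
      omega
    have hxN : x < (nthPrime N : ℝ) := by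
      apply max_lt
      · exact_mod_cast hlt
      · rw [lt_div_iff₀ hp0] at hb
        linarith
    have h3 : primePi x ≤ N - 1 := by
      have hx0 : (0:ℝ) ≤ x := le_trans (by positivity) (le_max_right _ _)
      have hfl : ⌊x⌋₊ < nthPrime N := by
        have : (⌊x⌋₊:ℝ) ≤ x := Nat.floor_le hx0
        exact_mod_cast lt_of_le_of_lt this hxN
      unfold primePi
      apply pi_lt_nth
      unfold nthPrime at hfl
      omega
    omega
  exact le_antisymm (le_csInf ⟨_, hmem⟩ hlb) (Nat.sInf_le hmem)
end

section
/- For every real k ≥ 5/3, the first k-Ramanujan prime satisfies R₁⁽ᵏ⁾ = 2. -/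
open Real

/-!
Chebyshev's method with the weights `1, -1/2, -1/3, -1/5, 1/30`. Since
`⌊t⌋ - ⌊t/2⌋ - ⌊t/3⌋ - ⌊t/5⌋ + ⌊t/30⌋ ≤ 1`, the combination
`log N! - log ⌊N/2⌋! - log ⌊N/3⌋! - log ⌊N/5⌋! + log ⌊N/30⌋!` is at most `ψ N`, while Stirling's
formula makes it `(7/15 log 2 + 3/10 log 3 + 1/6 log 5) N + O(log N) ≥ 13/10 log 2 · N + O(log N)`.
If `(3(N+1)/5, N]` contained no prime, then `ψ N ≤ θ (3(N+1)/5) + O(√N) ≤ 6/5 log 2 · N + O(√N)`,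
which is false for `N ≥ 10⁵`; below that a chain of primes, each at most `5/3` times the previous
one, does the job. So `(3x/5, x]` contains a prime for every `x ≥ 2`, and `π 1 = 0` excludes `m = 1`.
-/

open Finset Chebyshev
open ArithmeticFunction hiding log
open scoped Nat

theorem sum_Ioc_log_eq_log_factorial (N : ℕ) : ∑ n ∈ Ioc 0 N, log n = log N ! := by
  induction N with
  | zero => simp
  | succ N ih =>
    rw [sum_Ioc_succ_top N.zero_le, ih, Nat.factorial_succ, Nat.cast_mul,
      log_mul (by positivity) (by positivity), add_comm]

theorem log_factorial_eq_sum_vonMangoldt (N : ℕ) :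
    log N ! = ∑ d ∈ Ioc 0 N, Λ d * (N / d : ℕ) := by
  rw [← sum_Ioc_mul_zeta_eq_sum, vonMangoldt_mul_zeta, ← sum_Ioc_log_eq_log_factorial]
  simp [ArithmeticFunction.log_apply]

theorem log_factorial_div_eq_sum_vonMangoldt (N k : ℕ) :
    log (N / k)! = ∑ d ∈ Ioc 0 N, Λ d * (N / d / k : ℕ) := by
  rw [log_factorial_eq_sum_vonMangoldt]
  refine sum_subset_zero_on_sdiff (Ioc_subset_Ioc_right (Nat.div_le_self N k)) ?_ ?_
  · intro d hd
    simp only [mem_sdiff, mem_Ioc, not_and, not_le] at hd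
    rw [Nat.div_right_comm, Nat.div_eq_of_lt (hd.2 hd.1.1)]
    simp
  · intro d _
    rw [Nat.div_right_comm]

theorem le_log_factorial (n : ℕ) : n * log n - n ≤ log n ! := by
  rcases eq_or_ne n 0 with rfl | hn
  · simp
  have := Stirling.le_log_factorial_stirling hn
  have := log_natCast_nonneg n
  have := log_nonneg (by linarith [pi_gt_three] : (1 : ℝ) ≤ 2 * π)
  linarith

theorem log_factorial_le {n : ℕ} (hn : n ≠ 0) : log n ! ≤ n * log n - n + log n / 2 + 1 := by
  obtain ⟨m, rfl⟩ := Nat.exists_eq_succ_of_ne_zero hn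
  have h := Stirling.log_stirlingSeq'_antitone (Nat.zero_le m)
  simp only [Function.comp_apply, Stirling.stirlingSeq_one] at h
  rw [Stirling.log_stirlingSeq_formula, log_div (exp_pos 1).ne' (by positivity), log_exp,
    log_sqrt zero_le_two, log_mul two_ne_zero (by positivity),
    log_div (by positivity) (exp_pos 1).ne', log_exp] at h
  simp only [Nat.succ_eq_add_one] at *
  linarith

section TangentLines

variable {a x : ℝ} (ha : 0 < a) (hx : 0 < x)
include ha hx

theorem sub_mul_log_le_mul_log_sub_sub :
    (x - a) * log a ≤ (x * log x - x) - (a * log a - a) := by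
  have h := one_sub_inv_le_log_of_pos (div_pos hx ha)
  rw [log_div hx.ne' ha.ne', inv_div] at h
  have := mul_le_mul_of_nonneg_left h hx.le
  rw [mul_sub, mul_one, mul_div_cancel₀ _ hx.ne'] at this
  linarith

theorem mul_log_sub_sub_le_sub_mul_log :
    (x * log x - x) - (a * log a - a) ≤ (x - a) * log x := by
  have h := log_le_sub_one_of_pos (div_pos hx ha)
  rw [log_div hx.ne' ha.ne'] at h
  have := mul_le_mul_of_nonneg_left h ha.le
  rw [mul_sub, mul_sub, mul_one, mul_div_cancel₀ _ ha.ne'] at this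
  linarith

end TangentLines

theorem log_factorial_floor_le {x : ℝ} (hx : 1 ≤ x) :
    log ⌊x⌋₊ ! ≤ x * log x - x + log x / 2 + 1 := by
  have ha : (1 : ℝ) ≤ ⌊x⌋₊ := by exact_mod_cast Nat.one_le_floor_iff x |>.2 hx
  have hax : (⌊x⌋₊ : ℝ) ≤ x := Nat.floor_le (by linarith)
  have := sub_mul_log_le_mul_log_sub_sub (by linarith : (0 : ℝ) < ⌊x⌋₊) (by linarith : 0 < x)
  have := log_factorial_le (n := ⌊x⌋₊) (by exact_mod_cast (by linarith : (0 : ℝ) < ⌊x⌋₊).ne')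
  have := mul_nonneg (sub_nonneg.2 hax) (log_nonneg ha)
  have := log_le_log (by linarith) hax
  linarith

theorem le_log_factorial_floor {x : ℝ} (hx : 1 ≤ x) :
    x * log x - x - log x ≤ log ⌊x⌋₊ ! := by
  have ha : (1 : ℝ) ≤ ⌊x⌋₊ := by exact_mod_cast Nat.one_le_floor_iff x |>.2 hx
  have := mul_log_sub_sub_le_sub_mul_log (by linarith : (0 : ℝ) < ⌊x⌋₊) (by linarith : 0 < x)
  have := le_log_factorial ⌊x⌋₊
  have := mul_le_mul_of_nonneg_right
    (by linarith [Nat.lt_floor_add_one x] : x - ⌊x⌋₊ ≤ 1) (log_nonneg hx)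
  linarith

noncomputable def chebyshevCombination (N : ℕ) : ℝ :=
  log N ! - log (N / 2)! - log (N / 3)! - log (N / 5)! + log (N / 30)!

theorem chebyshevCombination_le_psi (N : ℕ) : chebyshevCombination N ≤ ψ N := by
  rw [chebyshevCombination, log_factorial_eq_sum_vonMangoldt,
    log_factorial_div_eq_sum_vonMangoldt, log_factorial_div_eq_sum_vonMangoldt,
    log_factorial_div_eq_sum_vonMangoldt, log_factorial_div_eq_sum_vonMangoldt, psi,
    Nat.floor_natCast, ← sum_sub_distrib, ← sum_sub_distrib, ← sum_sub_distrib,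
    ← sum_add_distrib]
  refine sum_le_sum fun d _ => ?_
  have hfloor : ((N / d : ℕ) : ℝ) + (N / d / 30 : ℕ)
      ≤ (N / d / 2 : ℕ) + (N / d / 3 : ℕ) + (N / d / 5 : ℕ) + 1 := by
    norm_cast; omega
  have := mul_le_mul_of_nonneg_left hfloor (vonMangoldt_nonneg (n := d))
  linarith

theorem chebyshevCombination_ge {N : ℕ} (hN : 30 ≤ N) :
    (7 / 15 * log 2 + 3 / 10 * log 3 + 1 / 6 * log 5) * N - 5 / 2 * log N - 3
      ≤ chebyshevCombination N := by
  have hN' : (30 : ℝ) ≤ N := by exact_mod_cast hN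
  have hfloor (k : ℕ) : log (N / k)! = log ⌊(N : ℝ) / k⌋₊ ! := by rw [Nat.floor_div_eq_div]
  have hlog (k : ℝ) (hk : 0 < k) : log (N / k) = log N - log k := log_div (by positivity) hk.ne'
  have h1 := le_log_factorial N
  have h2 := log_factorial_floor_le (x := N / 2) (by linarith)
  have h3 := log_factorial_floor_le (x := N / 3) (by linarith)
  have h5 := log_factorial_floor_le (x := N / 5) (by linarith)
  have h30 := le_log_factorial_floor (x := N / 30) (by linarith)
  have hlog30 : log 30 = log 2 + log 3 + log 5 := by
    rw [show (30 : ℝ) = 2 * 3 * 5 by norm_num, log_mul (by norm_num) (by norm_num),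
      log_mul (by norm_num) (by norm_num)]
  have : 0 ≤ log 30 := log_nonneg (by norm_num)
  rw [chebyshevCombination, hfloor 2, hfloor 3, hfloor 5, hfloor 30]
  push_cast
  rw [hlog 2 two_pos] at h2
  rw [hlog 3 three_pos] at h3
  rw [hlog 5 (by norm_num)] at h5
  rw [hlog 30 (by norm_num), hlog30] at h30
  linarith

theorem thirteen_tenths_log_two_le :
    13 / 10 * log 2 ≤ 7 / 15 * log 2 + 3 / 10 * log 3 + 1 / 6 * log 5 := by
  have h : log ((2 : ℝ) ^ 25) ≤ log (3 ^ 9 * 5 ^ 5) := log_le_log (by norm_num) (by norm_num)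
  rw [log_mul (by norm_num) (by norm_num), log_pow, log_pow, log_pow] at h
  push_cast at h
  linarith

namespace Chebyshev

theorem theta_le_theta_of_forall_prime_le {m n : ℕ} (h : ∀ p, p.Prime → p ≤ n → p ≤ m) :
    θ n ≤ θ m := by
  rw [theta_eq_sum_primesLE_log, theta_eq_sum_primesLE_log]
  refine sum_le_sum_of_subset_of_nonneg (fun p hp => ?_) fun p _ _ => log_natCast_nonneg p
  obtain ⟨hpn, hp⟩ := Nat.mem_primesLE.1 hp
  exact Nat.mem_primesLE.2 ⟨h p hp hpn, hp⟩

theorem psi_sub_theta_le_mul_sqrt_of_one_le {x : ℝ} (hx : 1 ≤ x) :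
    ψ x - θ x ≤ 3 * (log 4 + 4) * √x := by
  have hroot (n : ℝ) (hn : 2 ≤ n) : ψ (x ^ n⁻¹) ≤ ψ √x := by
    rw [sqrt_eq_rpow]
    exact psi_mono (rpow_le_rpow_of_exponent_le hx (by rw [one_div]; exact inv_anti₀ two_pos hn))
  have : ψ (x ^ (2 : ℝ)⁻¹) = ψ √x := by rw [sqrt_eq_rpow, one_div]
  have := psi_sub_theta_le_psi_add_psi_add_psi x
  have := hroot 3 (by norm_num)
  have := hroot 5 (by norm_num)
  have := psi_le_const_mul_self (sqrt_nonneg x)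
  linarith

end Chebyshev

theorem exists_prime_le_three_mul_succ_le_five_mul_of_large {N : ℕ} (hN : 10 ^ 5 ≤ N) :
    ∃ p, p.Prime ∧ p ≤ N ∧ 3 * (N + 1) ≤ 5 * p := by
  by_contra! h
  have hN' : (10 ^ 5 : ℝ) ≤ N := by exact_mod_cast hN
  have hlog4 : log 4 = 2 * log 2 := by
    rw [show (4 : ℝ) = 2 ^ 2 by norm_num, log_pow, Nat.cast_ofNat]
  have hθ : θ N ≤ 2 * log 2 * (3 * (N + 1) / 5) := by
    have hm : (((3 * (N + 1) / 5 : ℕ)) : ℝ) ≤ 3 * (N + 1) / 5 := by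
      exact_mod_cast Nat.cast_div_le (α := ℝ) (m := 3 * (N + 1)) (n := 5)
    calc θ N ≤ θ (3 * (N + 1) / 5 : ℕ) :=
          theta_le_theta_of_forall_prime_le fun p hp hpN => by have := h p hp hpN; omega
      _ ≤ log 4 * (3 * (N + 1) / 5 : ℕ) := theta_le_log4_mul_x (Nat.cast_nonneg _)
      _ ≤ 2 * log 2 * (3 * (N + 1) / 5) := by
        rw [hlog4]; exact mul_le_mul_of_nonneg_left hm (by positivity)
  have hψ := (chebyshevCombination_ge (by omega : 30 ≤ N)).trans (chebyshevCombination_le_psi N)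
  have hψθ := psi_sub_theta_le_mul_sqrt_of_one_le (x := N) (by linarith)
  have hA := mul_le_mul_of_nonneg_right thirteen_tenths_log_two_le (Nat.cast_nonneg N)
  set s := √(N : ℝ) with hs
  have hsN : s ^ 2 = N := sq_sqrt (Nat.cast_nonneg N)
  have hs316 : 316 ≤ s := by nlinarith [sqrt_nonneg (N : ℝ)]
  have hlogN : log N ≤ 2 * s := by
    have := log_le_sub_one_of_pos (by linarith : 0 < s)
    rw [hs, log_sqrt (Nat.cast_nonneg N)] at this
    linarith
  rw [hlog4] at hψθ
  have hl0 := log_two_gt_d9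
  have hl1 := log_two_lt_d9
  have : 0.6931471803 * (N : ℝ) ≤ log 2 * N := mul_le_mul_of_nonneg_right hl0.le (by linarith)
  have : log 2 * s ≤ 0.6931471808 * s := mul_le_mul_of_nonneg_right hl1.le (by linarith)
  have : 316 * s ≤ N := by rw [← hsN]; nlinarith
  linarith

theorem exists_prime_le_of_isChain {q : ℕ} {l : List ℕ} (hprime : ∀ p ∈ q :: l, p.Prime)
    (hchain : (q :: l).IsChain fun a b => 3 * b ≤ 5 * a) {n : ℕ} (hqn : q ≤ n)
    (hn : ∃ r ∈ l, n < r) : ∃ p, p.Prime ∧ p ≤ n ∧ 3 * (n + 1) ≤ 5 * p := by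
  induction l generalizing q with
  | nil => simp at hn
  | cons r l ih =>
    rw [List.isChain_cons_cons] at hchain
    by_cases hnr : n < r
    · exact ⟨q, hprime q List.mem_cons_self, hqn, by omega⟩
    · refine ih (fun p hp => hprime p (List.mem_cons_of_mem q hp)) hchain.2 (by omega) ?_
      obtain ⟨r', hr', hnr'⟩ := hn
      rcases List.mem_cons.1 hr' with rfl | hr'
      · exact absurd hnr' hnr
      · exact ⟨r', hr', hnr'⟩

theorem exists_prime_le_three_mul_succ_le_five_mul_of_small {n : ℕ} (h2 : 2 ≤ n)
    (hn : n < 123661) : ∃ p, p.Prime ∧ p ≤ n ∧ 3 * (n + 1) ≤ 5 * p :=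
  exists_prime_le_of_isChain (l := [3, 5, 7, 11, 17, 23, 37, 61, 101, 167, 277, 461, 761, 1259,
    2089, 3469, 5779, 9631, 16033, 26717, 44519, 74197, 123661]) (by norm_num) (by decide) h2
    ⟨123661, by simp, hn⟩

theorem exists_prime_le_three_mul_succ_le_five_mul {n : ℕ} (hn : 2 ≤ n) :
    ∃ p, p.Prime ∧ p ≤ n ∧ 3 * (n + 1) ≤ 5 * p := by
  rcases lt_or_ge n 123661 with h | h
  · exact exists_prime_le_three_mul_succ_le_five_mul_of_small hn h
  · exact exists_prime_le_three_mul_succ_le_five_mul_of_large (by omega)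

theorem Nat.primeCounting_lt_primeCounting {m n p : ℕ} (hp : p.Prime) (hmp : m < p)
    (hpn : p ≤ n) : m.primeCounting < n.primeCounting := by
  rw [← Nat.primesLE_card_eq_primeCounting, ← Nat.primesLE_card_eq_primeCounting]
  refine card_lt_card <| (ssubset_iff_of_subset (Nat.primesLE_mono (hmp.le.trans hpn))).2
    ⟨p, Nat.mem_primesLE.2 ⟨hpn, hp⟩, fun h => (Nat.le_of_mem_primesLE h).not_gt hmp⟩

theorem primePi_lt_primePi {x y : ℝ} {p : ℕ} (hp : p.Prime) (hyp : y < p) (hpx : p ≤ x) :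
    primePi y < primePi x :=
  Nat.primeCounting_lt_primeCounting hp ((Nat.floor_lt' hp.ne_zero).2 hyp) (Nat.le_floor hpx)

theorem primePi_div_lt_primePi {k x : ℝ} (hk : 5 / 3 ≤ k) (hx : 2 ≤ x) :
    primePi (x / k) < primePi x := by
  obtain ⟨p, hp, hpn, hnp⟩ :=
    exists_prime_le_three_mul_succ_le_five_mul (Nat.le_floor (by exact_mod_cast hx : (2 : ℝ) ≤ x))
  have hxn := Nat.lt_floor_add_one x
  have hnp' : 3 * ((⌊x⌋₊ : ℝ) + 1) ≤ 5 * p := by exact_mod_cast hnp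
  have hxk : x / k ≤ 3 * x / 5 := by
    rw [div_le_iff₀ (by linarith)]
    nlinarith
  exact primePi_lt_primePi hp (by linarith) ((Nat.cast_le.2 hpn).trans (Nat.floor_le (by linarith)))

theorem first_k_ramanujan_stmt8 :
    ∀ k : ℝ, 5 / 3 ≤ k → firstRamanujanPrime k = 2 := by
  intro k hk
  have h2 : 2 ∈ {m : ℕ | 0 < m ∧ ∀ x : ℝ, (m : ℝ) ≤ x → primePi (x / k) < primePi x} :=
    ⟨two_pos, fun x hx => primePi_div_lt_primePi hk (by exact_mod_cast hx)⟩
  refine le_antisymm (Nat.sInf_le h2) (le_csInf ⟨2, h2⟩ fun m ⟨hm0, hm⟩ => ?_)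
  by_contra! hm2
  have hπ := hm 1 (by exact_mod_cast (by omega : m ≤ 1))
  simp [primePi] at hπ
end

section
/- For every real k with 11/7 ≤ k < 5/3 (i.e., p₅/p₄ ≤ k < p₃/p₂), the first k-Ramanujan prime satisfies R₁⁽ᵏ⁾ = 5. -/
/-!
Chebyshev's method with the weights of `30! 1! / (15! 10! 6!)`. By Legendre's formula and
`⌊u⌋ + ⌊u/30⌋ ≤ ⌊u/2⌋ + ⌊u/3⌋ + ⌊u/5⌋ + 1`, the number `(30t)! t!` divides
`(15t)! (10t)! (6t)! · lcm(1, …, 30t)`, while binomial estimates make the quotient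
`(30t)! t! / ((15t)! (10t)! (6t)!)` at least `(2^14 3^9 5^5)^t` up to a quadratic factor. Hence
`ψ(30t) ≥ 27.6 t - O(log t)`. If no prime lay in `(7(30t + 30)/11, 30t]`, then
`ψ(30t) ≤ θ(30t) + 2 √(30t) log(30t) ≤ log 4 · 7(30t + 30)/11 + O(√t log t) ≈ 26.5 t`, which is
smaller once `30t ≥ 2^21`. Below that bound an explicit chain of primes, each less than `11/7` times
its predecessor, does the job. So for every `n ≥ 5` some prime lies in `(7(n + 1)/11, n]`, and
`x ≥ 5` has a prime in `(x/k, x]`; on the other hand `π(3k) = π(4) = π(3)` rules out `m ≤ 4`.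
-/

open Real

open Finset Chebyshev
open scoped Nat

namespace RamanujanPrime

theorem self_add_div_thirty_le (u : ℕ) : u + u / 30 ≤ u / 2 + u / 3 + u / 5 + 1 := by
  omega

theorem thirty_mul_div_add_div_le (t q : ℕ) :
    30 * t / q + t / q ≤ 15 * t / q + 10 * t / q + 6 * t / q + 1 := by
  have hdiv (a c : ℕ) (ha : 0 < a) : a * c / q / a = c / q := by
    rw [Nat.div_div_eq_div_mul, mul_comm q, Nat.mul_div_mul_left _ _ ha]
  have h2 : 30 * t / q / 2 = 15 * t / q := by
    rw [show 30 * t = 2 * (15 * t) by ring]; exact hdiv 2 _ two_pos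
  have h3 : 30 * t / q / 3 = 10 * t / q := by
    rw [show 30 * t = 3 * (10 * t) by ring]; exact hdiv 3 _ three_pos
  have h5 : 30 * t / q / 5 = 6 * t / q := by
    rw [show 30 * t = 5 * (6 * t) by ring]; exact hdiv 5 _ (by norm_num)
  have h30 : 30 * t / q / 30 = t / q := hdiv 30 t (by norm_num)
  have := self_add_div_thirty_le (30 * t / q)
  omega

theorem factorization_factorial_mul_le (t : ℕ) {p : ℕ} (hp : p.Prime) :
    ((30 * t)! * t !).factorization p ≤
      ((15 * t)! * (10 * t)! * (6 * t)!).factorization p + Nat.log p (30 * t) := by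
  have hb {c : ℕ} (hc : c ≤ 30 * t) : Nat.log p c < Nat.log p (30 * t) + 1 :=
    Nat.lt_succ_of_le (Nat.log_mono_right hc)
  simp only [Nat.factorization_mul, Nat.factorial_ne_zero, mul_ne_zero_iff, ne_eq,
    not_false_eq_true, and_self, Finsupp.add_apply,
    Nat.factorization_factorial hp (hb le_rfl),
    Nat.factorization_factorial hp (hb (by omega : t ≤ 30 * t)),
    Nat.factorization_factorial hp (hb (by omega : 15 * t ≤ 30 * t)),
    Nat.factorization_factorial hp (hb (by omega : 10 * t ≤ 30 * t)),
    Nat.factorization_factorial hp (hb (by omega : 6 * t ≤ 30 * t)), ← sum_add_distrib]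
  calc ∑ i ∈ Ico 1 (Nat.log p (30 * t) + 1), (30 * t / p ^ i + t / p ^ i)
      ≤ ∑ i ∈ Ico 1 (Nat.log p (30 * t) + 1),
          (15 * t / p ^ i + 10 * t / p ^ i + 6 * t / p ^ i + 1) :=
        sum_le_sum fun i _ ↦ thirty_mul_div_add_div_le t (p ^ i)
    _ = _ := by simp [sum_add_distrib]

theorem factorial_mul_dvd_mul_lcmUpto (t : ℕ) :
    (30 * t)! * t ! ∣ (15 * t)! * (10 * t)! * (6 * t)! * Nat.lcmUpto (30 * t) := by
  rw [← Nat.factorization_prime_le_iff_dvd (by positivity)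
    (mul_ne_zero (by positivity) (Nat.lcmUpto_ne_zero _))]
  intro p hp
  rw [Nat.factorization_mul (by positivity) (Nat.lcmUpto_ne_zero _), Finsupp.add_apply,
    Nat.factorization_lcmUpto _ hp]
  exact factorization_factorial_mul_le t hp

theorem pow_mul_pow_mul_choose_le_add_pow (a b n k : ℕ) :
    a ^ k * b ^ (n - k) * n.choose k ≤ (a + b) ^ n := by
  rcases le_or_gt k n with hk | hk
  · rw [add_pow]
    exact single_le_sum (f := fun m ↦ a ^ m * b ^ (n - m) * n.choose m)
      (fun _ _ ↦ Nat.zero_le _) (mem_range.mpr (Nat.lt_succ_of_le hk))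
  · simp [Nat.choose_eq_zero_of_lt hk]

theorem choose_succ_mul_two_pow_mul (n i : ℕ) (hi : i < n) :
    n.choose (i + 1) * 2 ^ (n - (i + 1)) * (2 * (i + 1)) =
      n.choose i * 2 ^ (n - i) * (n - i) := by
  have h := Nat.choose_succ_right_eq n i
  rw [show n - i = n - (i + 1) + 1 by omega, pow_succ] at *
  calc n.choose (i + 1) * 2 ^ (n - (i + 1)) * (2 * (i + 1))
      = n.choose (i + 1) * (i + 1) * (2 ^ (n - (i + 1)) * 2) := by ring
    _ = _ := by rw [h]; ring

theorem choose_mul_two_pow_le (j i : ℕ) :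
    (3 * j).choose i * 2 ^ (3 * j - i) ≤ (3 * j).choose j * 2 ^ (2 * j) := by
  set T : ℕ → ℕ := fun i ↦ (3 * j).choose i * 2 ^ (3 * j - i)
  have hup : MonotoneOn T (Set.Iic j) := by
    refine monotoneOn_of_le_add_one Set.ordConnected_Iic fun i _ _ hi ↦ ?_
    have hi : i < j := hi
    refine Nat.le_of_mul_le_mul_right ?_ (show 0 < 2 * (i + 1) by omega)
    calc T i * (2 * (i + 1)) ≤ T i * (3 * j - i) := Nat.mul_le_mul_left _ (by omega)
      _ = T (i + 1) * (2 * (i + 1)) := (choose_succ_mul_two_pow_mul _ i (by omega)).symm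
  have hdown : AntitoneOn T (Set.Ici j) := by
    refine antitoneOn_nat_Ici_of_succ_le fun i hi ↦ ?_
    rcases lt_or_ge i (3 * j) with hn | hn
    · refine Nat.le_of_mul_le_mul_right ?_ (show 0 < 2 * (i + 1) by omega)
      calc T (i + 1) * (2 * (i + 1)) = T i * (3 * j - i) := choose_succ_mul_two_pow_mul _ i hn
        _ ≤ T i * (2 * (i + 1)) := Nat.mul_le_mul_left _ (by omega)
    · simp [T, Nat.choose_eq_zero_of_lt (show 3 * j < i + 1 by omega)]
  have hj : T j = (3 * j).choose j * 2 ^ (2 * j) := by simp only [T]; congr 2; omega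
  rw [← hj]
  rcases le_total i j with h | h
  · exact hup h (Set.mem_Iic.mpr le_rfl) h
  · exact hdown (Set.mem_Ici.mpr le_rfl) h h

theorem three_pow_le (j : ℕ) : 3 ^ (3 * j) ≤ (3 * j + 1) * ((3 * j).choose j * 4 ^ j) := by
  calc 3 ^ (3 * j) = ∑ i ∈ range (3 * j + 1), (3 * j).choose i * 2 ^ (3 * j - i) := by
        rw [show 3 = 1 + 2 from rfl, add_pow]; simp [mul_comm]
    _ ≤ ∑ _i ∈ range (3 * j + 1), (3 * j).choose j * 2 ^ (2 * j) :=
        sum_le_sum fun i _ ↦ choose_mul_two_pow_le j i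
    _ = (3 * j + 1) * ((3 * j).choose j * 4 ^ j) := by simp [pow_mul]

theorem factorial_mul_choose (t : ℕ) :
    (30 * t)! * t ! * (6 * t).choose t =
      (15 * t)! * (10 * t)! * (6 * t)! * ((30 * t).choose (15 * t) * (15 * t).choose (5 * t)) := by
  have e30 := Nat.choose_mul_factorial_mul_factorial (show 15 * t ≤ 30 * t by omega)
  have e15 := Nat.choose_mul_factorial_mul_factorial (show 5 * t ≤ 15 * t by omega)
  have e6 := Nat.choose_mul_factorial_mul_factorial (show t ≤ 6 * t by omega)
  rw [show 30 * t - 15 * t = 15 * t by omega] at e30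
  rw [show 15 * t - 5 * t = 10 * t by omega] at e15
  rw [show 6 * t - t = 5 * t by omega] at e6
  refine Nat.eq_of_mul_eq_mul_right (Nat.factorial_pos (5 * t)) ?_
  calc (30 * t)! * t ! * (6 * t).choose t * (5 * t)!
      = (30 * t)! * ((6 * t).choose t * t ! * (5 * t)!) := by ring
    _ = _ := by
      rw [e6, ← e30]
      nth_rewrite 2 [← e15]
      ring

theorem pow_mul_factorial_le (t : ℕ) :
    (2 ^ 14 * 3 ^ 9 * 5 ^ 5) ^ t * ((15 * t)! * (10 * t)! * (6 * t)!) ≤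
      (30 * t + 1) * (15 * t + 1) * ((30 * t)! * t !) := by
  have hc1 : 4 ^ (15 * t) ≤ (30 * t + 1) * (30 * t).choose (15 * t) := by
    simpa [← mul_assoc] using Nat.four_pow_le_two_mul_add_one_mul_central_binom (15 * t)
  have hc2 : 3 ^ (15 * t) ≤ (15 * t + 1) * ((15 * t).choose (5 * t) * 4 ^ (5 * t)) := by
    simpa [← mul_assoc] using three_pow_le (5 * t)
  have hc3 : 5 ^ (5 * t) * (6 * t).choose t ≤ 6 ^ (6 * t) := by
    simpa [show 6 * t - t = 5 * t by omega] using pow_mul_pow_mul_choose_le_add_pow 1 5 (6 * t) t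
  have hpow : (2 ^ 14 * 3 ^ 9 * 5 ^ 5) ^ t * (4 ^ (5 * t) * 6 ^ (6 * t)) =
      4 ^ (15 * t) * 3 ^ (15 * t) * 5 ^ (5 * t) := by
    simp only [pow_mul, ← mul_pow]; norm_num
  refine Nat.le_of_mul_le_mul_right ?_ (show 0 < 4 ^ (5 * t) * 6 ^ (6 * t) by positivity)
  calc (2 ^ 14 * 3 ^ 9 * 5 ^ 5) ^ t * ((15 * t)! * (10 * t)! * (6 * t)!) *
        (4 ^ (5 * t) * 6 ^ (6 * t))
      = 4 ^ (15 * t) * 3 ^ (15 * t) * 5 ^ (5 * t) * ((15 * t)! * (10 * t)! * (6 * t)!) := by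
        rw [← hpow]; ring
    _ ≤ (30 * t + 1) * (30 * t).choose (15 * t) *
          ((15 * t + 1) * ((15 * t).choose (5 * t) * 4 ^ (5 * t))) * 5 ^ (5 * t) *
          ((15 * t)! * (10 * t)! * (6 * t)!) := by gcongr
    _ = (30 * t + 1) * (15 * t + 1) * 4 ^ (5 * t) * 5 ^ (5 * t) *
          ((30 * t)! * t ! * (6 * t).choose t) := by
        rw [factorial_mul_choose]; ring
    _ = (30 * t + 1) * (15 * t + 1) * 4 ^ (5 * t) * ((30 * t)! * t !) *
          (5 ^ (5 * t) * (6 * t).choose t) := by ring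
    _ ≤ (30 * t + 1) * (15 * t + 1) * 4 ^ (5 * t) * ((30 * t)! * t !) * 6 ^ (6 * t) := by
        gcongr
    _ = (30 * t + 1) * (15 * t + 1) * ((30 * t)! * t !) * (4 ^ (5 * t) * 6 ^ (6 * t)) := by
        ring

theorem pow_le_mul_lcmUpto (t : ℕ) :
    (2 ^ 14 * 3 ^ 9 * 5 ^ 5) ^ t ≤ (30 * t + 1) * (15 * t + 1) * Nat.lcmUpto (30 * t) := by
  have hF : 0 < (15 * t)! * (10 * t)! * (6 * t)! := by positivity
  refine Nat.le_of_mul_le_mul_right ?_ hF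
  calc (2 ^ 14 * 3 ^ 9 * 5 ^ 5) ^ t * ((15 * t)! * (10 * t)! * (6 * t)!)
      ≤ (30 * t + 1) * (15 * t + 1) * ((30 * t)! * t !) := pow_mul_factorial_le t
    _ ≤ (30 * t + 1) * (15 * t + 1) *
          ((15 * t)! * (10 * t)! * (6 * t)! * Nat.lcmUpto (30 * t)) :=
        Nat.mul_le_mul_left _
          (Nat.le_of_dvd (mul_pos hF (Nat.lcmUpto_pos _)) (factorial_mul_dvd_mul_lcmUpto t))
    _ = _ := by ring

theorem mul_log_le_log_add_psi (t : ℕ) :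
    t * log (2 ^ 14 * 3 ^ 9 * 5 ^ 5) ≤ log ((30 * t + 1) * (15 * t + 1)) + ψ (30 * t) := by
  have h := pow_le_mul_lcmUpto t
  rw [show (30 * t : ℝ) = ((30 * t : ℕ) : ℝ) by push_cast; ring, psi_eq_log_lcmUpto,
    ← log_pow, ← log_mul (by positivity) (by exact_mod_cast (Nat.lcmUpto_pos _).ne')]
  exact log_le_log (by positivity) (by exact_mod_cast h)

theorem theta_le_theta_of_forall_prime_le {x y : ℝ}
    (h : ∀ p : ℕ, p.Prime → (p : ℝ) ≤ x → (p : ℝ) ≤ y) : θ x ≤ θ y := by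
  rw [theta_eq_sum_primesLE, theta_eq_sum_primesLE]
  refine sum_le_sum_of_subset_of_nonneg (fun p hp ↦ ?_) fun p _ _ ↦ log_natCast_nonneg p
  rw [Nat.mem_primesLE] at hp ⊢
  have hpx : (p : ℝ) ≤ x := (Nat.le_floor_iff' hp.2.ne_zero).mp hp.1
  exact ⟨Nat.le_floor (h p hp.2 hpx), hp.2⟩

theorem upper_bound_lt_lower_bound {t : ℝ} (ht : 2 ^ 21 ≤ 30 * t) :
    log ((30 * t + 1) * (15 * t + 1)) + 2 * √(30 * t) * log (30 * t) +
      log 4 * ((210 * t + 209) / 11) < t * log (2 ^ 14 * 3 ^ 9 * 5 ^ 5) := by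
  set y := √(30 * t)
  have hy2 : y ^ 2 = 30 * t := Real.sq_sqrt (by linarith)
  have hy : 1448 ≤ y := Real.le_sqrt_of_sq_le (by linarith)
  have hlogx : log (30 * t) = 2 * log y := by rw [← hy2, log_pow]; push_cast; ring
  have hlog4 : log 4 = 2 * log 2 := by
    rw [show (4 : ℝ) = 2 ^ 2 by norm_num, log_pow]; push_cast; ring
  have hlogy : log y ≤ y / 1024 - 1 + 10 * log 2 := by
    have h := log_le_sub_one_of_pos (show 0 < y / 1024 by positivity)
    rw [log_div (by positivity) (by norm_num), show (1024 : ℝ) = 2 ^ 10 by norm_num,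
      log_pow] at h
    push_cast at h
    linarith
  have hpoly : log ((30 * t + 1) * (15 * t + 1)) ≤ 4 * log y := by
    rw [show 4 * log y = log ((30 * t) ^ 2) by rw [log_pow, hlogx]; push_cast; ring]
    exact log_le_log (by nlinarith) (by nlinarith)
  have hX : 199 * log 2 ≤ 5 * log (2 ^ 14 * 3 ^ 9 * 5 ^ 5) := by
    have h := log_le_log (by norm_num)
      (show (2 : ℝ) ^ 199 ≤ (2 ^ 14 * 3 ^ 9 * 5 ^ 5) ^ 5 by norm_num)
    rw [log_pow, log_pow] at h
    push_cast at h
    linarith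
  have hlog2 : (69 / 100 : ℝ) < log 2 := by have := log_two_gt_d9; norm_num at this; linarith
  have hlog2' : log 2 < (7 / 10 : ℝ) := by have := log_two_lt_d9; norm_num at this; linarith
  have ht0 : 0 ≤ t := by linarith
  rw [hlogx, hlog4]
  set X := log (2 ^ 14 * 3 ^ 9 * 5 ^ 5)
  linarith [mul_le_mul_of_nonneg_left hlogy (show 0 ≤ 4 * y by positivity),
    mul_le_mul_of_nonneg_left hX ht0, mul_le_mul_of_nonneg_left hlog2.le ht0,
    mul_le_mul_of_nonneg_left hlog2'.le (show 0 ≤ y by positivity),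
    mul_le_mul_of_nonneg_left hy (show 0 ≤ y by positivity), log_nonneg (show 1 ≤ y by linarith)]

theorem exists_prime_le_thirty_mul (t : ℕ) (ht : 2 ^ 21 ≤ 30 * t) :
    ∃ p, p.Prime ∧ p ≤ 30 * t ∧ 210 * (t + 1) ≤ 11 * p := by
  by_contra! h
  have hθ : θ (30 * t) ≤ log 4 * ((210 * t + 209) / 11) := by
    refine (theta_le_theta_of_forall_prime_le fun p hp hpx ↦ ?_).trans
      (theta_le_log4_mul_x (by positivity))
    have := h p hp (by exact_mod_cast hpx)
    rw [le_div_iff₀ (by norm_num)]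
    exact_mod_cast (by omega : p * 11 ≤ 210 * t + 209)
  have hψ := psi_sub_theta_le (x := 30 * t) (by norm_cast; omega)
  have := upper_bound_lt_lower_bound (t := t) (by exact_mod_cast ht)
  have := mul_log_le_log_add_psi t
  -- `linarith` only matches the two occurrences of this constant once it is an opaque atom
  set X := log (2 ^ 14 * 3 ^ 9 * 5 ^ 5)
  linarith

theorem exists_prime_of_large (n : ℕ) (hn : 2 ^ 21 + 30 ≤ n) :
    ∃ p, p.Prime ∧ p ≤ n ∧ 7 * (n + 1) ≤ 11 * p := by
  obtain ⟨p, hp, hpt, hbound⟩ := exists_prime_le_thirty_mul (n / 30) (by omega)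
  exact ⟨p, hp, by omega, by omega⟩

theorem exists_mem_le_of_isChain {a b n : ℕ} :
    ∀ {l : List ℕ} (hl : l ≠ []), l.IsChain (fun q r ↦ b * r ≤ a * q) → l.head hl ≤ n →
      b * (n + 1) ≤ a * l.getLast hl → ∃ q ∈ l, q ≤ n ∧ b * (n + 1) ≤ a * q
  | [p], _, _, hpn, hn => ⟨p, List.mem_singleton_self p, hpn, hn⟩
  | p :: r :: l, _, hchain, hpn, hn => by
    rw [List.isChain_cons_cons] at hchain
    rcases lt_or_ge n r with hnr | hrn
    · exact ⟨p, List.mem_cons_self, hpn, by nlinarith [hchain.1]⟩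
    · obtain ⟨q, hq, hqn, hbound⟩ :=
        exists_mem_le_of_isChain (List.cons_ne_nil r l) hchain.2 hrn hn
      exact ⟨q, List.mem_cons_of_mem p hq, hqn, hbound⟩

def primeChain : List ℕ :=
  [5, 7, 11, 17, 23, 31, 47, 73, 113, 173, 271, 421, 661, 1033, 1621, 2543, 3989, 6263, 9839,
    15461, 24281, 38153, 59951, 94207, 148021, 232597, 365509, 574367, 902569, 1418299]

theorem prime_of_mem_primeChain : ∀ p ∈ primeChain, p.Prime := by
  simp only [primeChain, List.forall_mem_cons, List.not_mem_nil, IsEmpty.forall_iff,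
    implies_true, and_true]
  norm_num

/-- `2228754 = ⌊11 · 1418299 / 7⌋ - 1`, the end of the range covered by `primeChain`. -/
theorem exists_prime_of_small (n : ℕ) (h5 : 5 ≤ n) (hn : n ≤ 2228754) :
    ∃ p, p.Prime ∧ p ≤ n ∧ 7 * (n + 1) ≤ 11 * p := by
  obtain ⟨p, hp, hpn, hbound⟩ := exists_mem_le_of_isChain (a := 11) (b := 7) (l := primeChain)
    (by simp [primeChain]) (by decide) (by simpa [primeChain]) (by simp [primeChain]; omega)
  exact ⟨p, prime_of_mem_primeChain p hp, hpn, hbound⟩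

theorem exists_prime_le_of_five_le (n : ℕ) (h5 : 5 ≤ n) :
    ∃ p, p.Prime ∧ p ≤ n ∧ 7 * (n + 1) ≤ 11 * p := by
  rcases le_or_gt n 2228754 with hn | hn
  · exact exists_prime_of_small n h5 hn
  · exact exists_prime_of_large n (by omega)

theorem primePi_lt_primePi {p : ℕ} (hp : p.Prime) {y x : ℝ} (hy : y < p) (hx : (p : ℝ) ≤ x) :
    primePi y < primePi x := by
  have hyp : ⌊y⌋₊ < p := (Nat.floor_lt' hp.ne_zero).mpr hy
  calc Nat.primeCounting ⌊y⌋₊ ≤ Nat.primeCounting (p - 1) := Nat.monotone_primeCounting (by omega)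
    _ < Nat.primeCounting p := by
      rw [Nat.primeCounting_sub_one]; exact Nat.count_lt_count_succ_iff.mpr hp
    _ ≤ Nat.primeCounting ⌊x⌋₊ := Nat.monotone_primeCounting (Nat.le_floor hx)

theorem primePi_div_lt_primePi {k : ℝ} (hk : 11 / 7 ≤ k) {x : ℝ} (hx : 5 ≤ x) :
    primePi (x / k) < primePi x := by
  obtain ⟨p, hp, hpn, hbound⟩ := exists_prime_le_of_five_le ⌊x⌋₊ (Nat.le_floor (by simpa))
  have hbound' : 7 * ((⌊x⌋₊ : ℝ) + 1) ≤ 11 * p := by exact_mod_cast hbound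
  refine primePi_lt_primePi hp ?_ ((Nat.le_floor_iff (by linarith)).mp hpn)
  rw [div_lt_iff₀ (by linarith)]
  nlinarith [Nat.lt_floor_add_one x]

theorem primePi_three_eq_primePi_three_mul {k : ℝ} (hk1 : 11 / 7 ≤ k) (hk2 : k < 5 / 3) :
    primePi 3 = primePi (3 * k) := by
  have hfloor : ⌊3 * k⌋₊ = 4 := by
    rw [Nat.floor_eq_iff (by linarith)]; constructor <;> push_cast <;> linarith
  rw [primePi, primePi, hfloor, show ⌊(3 : ℝ)⌋₊ = 3 by norm_num]
  decide

end RamanujanPrime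

open RamanujanPrime in
theorem first_k_ramanujan_stmt11 (k : ℝ) (hk1 : (11 / 7 : ℝ) ≤ k) (hk2 : k < (5 / 3 : ℝ)) :
    firstRamanujanPrime k = 5 := by
  have hk : 0 < k := by linarith
  have h5 : 5 ∈ {m : ℕ | 0 < m ∧ ∀ x : ℝ, (m : ℝ) ≤ x → primePi (x / k) < primePi x} :=
    ⟨by norm_num, fun x hx ↦ primePi_div_lt_primePi hk1 (by exact_mod_cast hx)⟩
  refine le_antisymm (Nat.sInf_le h5) (le_csInf ⟨5, h5⟩ fun m ⟨_, hm⟩ ↦ ?_)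
  by_contra! hm4
  have hm4' : (m : ℝ) ≤ 4 := by exact_mod_cast Nat.lt_succ_iff.mp hm4
  have h := hm (3 * k) (by linarith)
  rw [mul_div_cancel_right₀ _ hk.ne', primePi_three_eq_primePi_three_mul hk1 hk2] at h
  exact lt_irrefl _ h
end
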